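/- arXiv:2311.17973 — 4 statements merged into one kernel-verified Lean document; each statement's English description precedes it below -/
import Mathlib

section
/- Let P be a symmetric positive definite n×n real matrix and G ∈ ℝ^{n×n} satisfy PG + Gᵀ P ≻ 0. Then there exists β > 0 such that for the norm ‖x‖ = √(xᵀPx), the inequality ‖exp(sG)x‖ ≤ e^{βs}‖x‖ holds for all s ≤ 0 and all x ∈ ℝ^n. -/
open Matrix

private lemma quad_cont {n : ℕ} (A : Matrix (Fin n) (Fin n) ℝ) :
    Continuous fun x : Fin n → ℝ => x ⬝ᵥ A.mulVec x := by
  simp only [dotProduct, Matrix.mulVec]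
  exact continuous_finset_sum _ fun i _ =>
    (continuous_apply i).mul (continuous_finset_sum _ fun j _ =>
      continuous_const.mul (continuous_apply j))

private lemma quad_smul {n : ℕ} (A : Matrix (Fin n) (Fin n) ℝ) (c : ℝ) (x : Fin n → ℝ) :
    (c • x) ⬝ᵥ A.mulVec (c • x) = c ^ 2 * (x ⬝ᵥ A.mulVec x) := by
  simp [Matrix.mulVec_smul, smul_dotProduct, dotProduct_smul, smul_eq_mul]
  ring

private lemma quad_pos {n : ℕ} {A : Matrix (Fin n) (Fin n) ℝ} (hA : A.PosDef)
    {x : Fin n → ℝ} (hx : x ≠ 0) : 0 < x ⬝ᵥ A.mulVec x := by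
  have := hA.dotProduct_mulVec_pos hx
  simpa using this

private lemma dot_shift {n : ℕ} (A : Matrix (Fin n) (Fin n) ℝ) (a b : Fin n → ℝ) :
    (A.mulVec a) ⬝ᵥ b = a ⬝ᵥ (Aᵀ.mulVec b) := by
  rw [Matrix.dotProduct_mulVec, Matrix.vecMul_transpose]

/-- Existence of `β > 0` with `2β·(yᵀPy) ≤ yᵀQy` for all `y`, when `P, Q ≻ 0`. -/
private lemma exists_beta {n : ℕ} (P Q : Matrix (Fin n) (Fin n) ℝ)
    (hP : P.PosDef) (hQ : Q.PosDef) :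
    ∃ β : ℝ, 0 < β ∧ ∀ y : Fin n → ℝ,
      2 * β * (y ⬝ᵥ P.mulVec y) ≤ y ⬝ᵥ Q.mulVec y := by
  rcases Nat.eq_zero_or_pos n with h0 | hn
  · subst h0
    exact ⟨1, one_pos, fun y => by simp [dotProduct]⟩
  · haveI : Nonempty (Fin n) := ⟨⟨0, hn⟩⟩
    haveI : Nontrivial (Fin n → ℝ) := inferInstance
    have hsph : (Metric.sphere (0 : Fin n → ℝ) 1).Nonempty :=
      NormedSpace.sphere_nonempty.mpr zero_le_one
    obtain ⟨u, hu, hum⟩ := (isCompact_sphere (0 : Fin n → ℝ) 1).exists_isMinOn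
      hsph (quad_cont Q).continuousOn
    obtain ⟨v, hv, hvM⟩ := (isCompact_sphere (0 : Fin n → ℝ) 1).exists_isMaxOn
      hsph (quad_cont P).continuousOn
    have hune : u ≠ 0 := by
      intro h
      simp only [Metric.mem_sphere, dist_zero_right, h, norm_zero] at hu
      exact one_ne_zero hu.symm
    have hvne : v ≠ 0 := by
      intro h
      simp only [Metric.mem_sphere, dist_zero_right, h, norm_zero] at hv
      exact one_ne_zero hv.symm
    have hm : 0 < u ⬝ᵥ Q.mulVec u := quad_pos hQ hune
    have hM : 0 < v ⬝ᵥ P.mulVec v := quad_pos hP hvne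
    set m := u ⬝ᵥ Q.mulVec u with hmdef
    set M := v ⬝ᵥ P.mulVec v with hMdef
    refine ⟨m / (2 * M), by positivity, fun y => ?_⟩
    rcases eq_or_ne y 0 with rfl | hy
    · simp
    · have hny : (0:ℝ) < ‖y‖ := norm_pos_iff.mpr hy
      set w : Fin n → ℝ := ‖y‖⁻¹ • y with hwdef
      have hw : w ∈ Metric.sphere (0 : Fin n → ℝ) 1 := by
        simp [hwdef, norm_smul, abs_of_nonneg (inv_nonneg.mpr hny.le),
          inv_mul_cancel₀ hny.ne']
      have hinv2 : ‖y‖⁻¹ ^ 2 * ‖y‖ ^ 2 = 1 := by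
        rw [← mul_pow, inv_mul_cancel₀ hny.ne', one_pow]
      have hq : w ⬝ᵥ Q.mulVec w = ‖y‖⁻¹ ^ 2 * (y ⬝ᵥ Q.mulVec y) := quad_smul Q _ y
      have hp : w ⬝ᵥ P.mulVec w = ‖y‖⁻¹ ^ 2 * (y ⬝ᵥ P.mulVec y) := quad_smul P _ y
      have h1 : m ≤ w ⬝ᵥ Q.mulVec w := isMinOn_iff.mp hum w hw
      have h2 : w ⬝ᵥ P.mulVec w ≤ M := isMaxOn_iff.mp hvM w hw
      have key1 : m * ‖y‖ ^ 2 ≤ y ⬝ᵥ Q.mulVec y := by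
        have h1' := mul_le_mul_of_nonneg_right (hq ▸ h1) (sq_nonneg ‖y‖)
        calc m * ‖y‖ ^ 2 ≤ ‖y‖⁻¹ ^ 2 * (y ⬝ᵥ Q.mulVec y) * ‖y‖ ^ 2 := h1'
          _ = (‖y‖⁻¹ ^ 2 * ‖y‖ ^ 2) * (y ⬝ᵥ Q.mulVec y) := by ring
          _ = y ⬝ᵥ Q.mulVec y := by rw [hinv2, one_mul]
      have key2 : y ⬝ᵥ P.mulVec y ≤ M * ‖y‖ ^ 2 := by
        have h2' := mul_le_mul_of_nonneg_right (hp ▸ h2) (sq_nonneg ‖y‖)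
        calc y ⬝ᵥ P.mulVec y = (‖y‖⁻¹ ^ 2 * ‖y‖ ^ 2) * (y ⬝ᵥ P.mulVec y) := by
              rw [hinv2, one_mul]
          _ = ‖y‖⁻¹ ^ 2 * (y ⬝ᵥ P.mulVec y) * ‖y‖ ^ 2 := by ring
          _ ≤ M * ‖y‖ ^ 2 := h2'
      have hβ : 2 * (m / (2 * M)) = m / M := by field_simp
      rw [hβ, div_mul_eq_mul_div, div_le_iff₀ hM]
      nlinarith [mul_le_mul_of_nonneg_left key2 hm.le,
        mul_le_mul_of_nonneg_right key1 hM.le]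

/-- if P ≻ 0 and PG + GᵀP ≻ 0 then the dilation d(s) = exp(sG) is
strictly monotone w.r.t. the norm ‖x‖ = √(xᵀPx): there is β > 0 with
‖d(s)x‖ ≤ e^{βs}‖x‖ for all s ≤ 0 and all x. -/
theorem strictly_monotone_dilation {n : ℕ} (P G : Matrix (Fin n) (Fin n) ℝ)
    (hP : P.PosDef) (hPG : (P * G + Gᵀ * P).PosDef) :
    ∃ β : ℝ, 0 < β ∧ ∀ s : ℝ, s ≤ 0 → ∀ x : Fin n → ℝ,
      Real.sqrt (((NormedSpace.exp (s • G)).mulVec x) ⬝ᵥ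
          P.mulVec ((NormedSpace.exp (s • G)).mulVec x)) ≤
        Real.exp (β * s) * Real.sqrt (x ⬝ᵥ P.mulVec x) := by
  obtain ⟨β, hβ, hβle⟩ := exists_beta P (P * G + Gᵀ * P) hP hPG
  refine ⟨β, hβ, fun s hs x => ?_⟩
  set Q : Matrix (Fin n) (Fin n) ℝ := P * G + Gᵀ * P with hQdef
  obtain ⟨y, hydef⟩ : ∃ y : ℝ → (Fin n → ℝ),
      y = fun t => (NormedSpace.exp (t • G)).mulVec x := ⟨_, rfl⟩
  -- derivative of y
  have hy : ∀ t : ℝ, HasDerivAt y (G.mulVec (y t)) t := by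
    intro t
    letI : NormedRing (Matrix (Fin n) (Fin n) ℝ) := Matrix.linftyOpNormedRing
    letI : NormedAlgebra ℝ (Matrix (Fin n) (Fin n) ℝ) := Matrix.linftyOpNormedAlgebra
    haveI : CompleteSpace (Matrix (Fin n) (Fin n) ℝ) := by infer_instance
    have h1 := hasDerivAt_exp_smul_const (𝕂 := ℝ) G t
    let Llin : Matrix (Fin n) (Fin n) ℝ →ₗ[ℝ] (Fin n → ℝ) :=
      { toFun := fun M => M.mulVec x
        map_add' := fun M N => Matrix.add_mulVec M N x
        map_smul' := fun c M => Matrix.smul_mulVec c M x }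
    let L := LinearMap.toContinuousLinearMap Llin
    have h2 := L.hasFDerivAt.comp_hasDerivAt t h1
    have heq : L (NormedSpace.exp (t • G) * G) =
        G.mulVec ((NormedSpace.exp (t • G)).mulVec x) := by
      show (NormedSpace.exp (t • G) * G).mulVec x = _
      have hc : Commute (NormedSpace.exp (t • G)) G :=
        ((Commute.refl G).smul_left t).exp_left
      rw [Matrix.mulVec_mulVec, hc.eq]
    replace h2 := h2.congr_deriv heq
    rw [hydef]
    exact h2
  obtain ⟨V, hVdef⟩ : ∃ V : ℝ → ℝ, V = fun t => y t ⬝ᵥ P.mulVec (y t) := ⟨_, rfl⟩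
  -- derivative of V
  have hV : ∀ t : ℝ, HasDerivAt V (y t ⬝ᵥ Q.mulVec (y t)) t := by
    intro t
    have hz : HasDerivAt (fun u => P.mulVec (y u)) (P.mulVec (G.mulVec (y t))) t := by
      have := ((Matrix.mulVecLin P).toContinuousLinearMap).hasFDerivAt.comp_hasDerivAt t (hy t)
      simpa [Function.comp_def] using this
    have hcoord : ∀ i : Fin n,
        HasDerivAt (fun u => y u i * P.mulVec (y u) i)
          (G.mulVec (y t) i * P.mulVec (y t) i + y t i * P.mulVec (G.mulVec (y t)) i) t := by
      intro i
      have h1 : HasDerivAt (fun u => y u i) (G.mulVec (y t) i) t :=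
        (ContinuousLinearMap.proj (R := ℝ) (φ := fun _ : Fin n => ℝ) i).hasFDerivAt.comp_hasDerivAt
          t (hy t)
      have h2 : HasDerivAt (fun u => P.mulVec (y u) i) (P.mulVec (G.mulVec (y t)) i) t :=
        (ContinuousLinearMap.proj (R := ℝ) (φ := fun _ : Fin n => ℝ) i).hasFDerivAt.comp_hasDerivAt
          t hz
      exact h1.mul h2
    have hsum := HasDerivAt.fun_sum (u := Finset.univ) (fun i _ => hcoord i)
    have hfun : (fun u => ∑ i : Fin n, y u i * P.mulVec (y u) i) = V := by
      funext u
      rw [hVdef]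
      simp [dotProduct]
    rw [hfun] at hsum
    have hval : (∑ i : Fin n,
        (G.mulVec (y t) i * P.mulVec (y t) i + y t i * P.mulVec (G.mulVec (y t)) i)) =
        y t ⬝ᵥ Q.mulVec (y t) := by
      rw [Finset.sum_add_distrib]
      have e1 : (∑ i : Fin n, G.mulVec (y t) i * P.mulVec (y t) i) =
          G.mulVec (y t) ⬝ᵥ P.mulVec (y t) := rfl
      have e2 : (∑ i : Fin n, y t i * P.mulVec (G.mulVec (y t)) i) =
          y t ⬝ᵥ P.mulVec (G.mulVec (y t)) := rfl
      rw [e1, e2]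
      have h1 : G.mulVec (y t) ⬝ᵥ P.mulVec (y t) = y t ⬝ᵥ (Gᵀ * P).mulVec (y t) := by
        rw [dot_shift, Matrix.mulVec_mulVec (y t) Gᵀ P]
      have h2 : y t ⬝ᵥ P.mulVec (G.mulVec (y t)) = y t ⬝ᵥ (P * G).mulVec (y t) :=
        congrArg _ (Matrix.mulVec_mulVec (y t) P G)
      rw [h1, h2, hQdef, Matrix.add_mulVec, dotProduct_add]
      ring
    rw [hval] at hsum
    exact hsum
  -- Grönwall via monotonicity of W
  obtain ⟨W, hWdef⟩ : ∃ W : ℝ → ℝ, W = fun t => Real.exp (-(2 * β) * t) * V t := ⟨_, rfl⟩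
  have hW : ∀ t : ℝ, HasDerivAt W
      (Real.exp (-(2 * β) * t) * (-(2 * β)) * V t +
        Real.exp (-(2 * β) * t) * (y t ⬝ᵥ Q.mulVec (y t))) t := by
    intro t
    have hE : HasDerivAt (fun u : ℝ => Real.exp (-(2 * β) * u))
        (Real.exp (-(2 * β) * t) * (-(2 * β))) t := by
      have := ((hasDerivAt_id t).const_mul (-(2 * β))).exp
      simpa [mul_comm] using this
    rw [hWdef]
    exact hE.mul (hV t)
  have hW' : ∀ t : ℝ, 0 ≤ Real.exp (-(2 * β) * t) * (-(2 * β)) * V t +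
      Real.exp (-(2 * β) * t) * (y t ⬝ᵥ Q.mulVec (y t)) := by
    intro t
    have hle := hβle (y t)
    have hEpos : (0:ℝ) < Real.exp (-(2 * β) * t) := Real.exp_pos _
    have hrw : Real.exp (-(2 * β) * t) * (-(2 * β)) * V t +
        Real.exp (-(2 * β) * t) * (y t ⬝ᵥ Q.mulVec (y t)) =
        Real.exp (-(2 * β) * t) * ((y t ⬝ᵥ Q.mulVec (y t)) - 2 * β * V t) := by ring
    rw [hrw]
    apply mul_nonneg hEpos.le
    rw [sub_nonneg, hVdef]
    exact hle
  have hmono : Monotone W :=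
    monotone_of_deriv_nonneg (fun t => (hW t).differentiableAt)
      (fun t => by rw [(hW t).deriv]; exact hW' t)
  have hWs : W s ≤ W 0 := hmono hs
  rw [hWdef] at hWs
  simp only [mul_zero, Real.exp_zero, one_mul] at hWs
  -- V 0 = x ⬝ᵥ P x
  have hV0 : V 0 = x ⬝ᵥ P.mulVec x := by
    rw [hVdef, hydef]
    simp [NormedSpace.exp_zero]
  rw [hV0] at hWs
  -- conclude
  have hEpos : (0:ℝ) < Real.exp (-(2 * β) * s) := Real.exp_pos _
  have hVs : V s ≤ Real.exp (2 * β * s) * (x ⬝ᵥ P.mulVec x) := by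
    have h' : V s ≤ (x ⬝ᵥ P.mulVec x) / Real.exp (-(2 * β) * s) := by
      rw [le_div_iff₀ hEpos]
      linarith [hWs]
    calc V s ≤ (x ⬝ᵥ P.mulVec x) / Real.exp (-(2 * β) * s) := h'
      _ = Real.exp (2 * β * s) * (x ⬝ᵥ P.mulVec x) := by
          rw [div_eq_mul_inv, ← Real.exp_neg, show -(-(2 * β) * s) = 2 * β * s by ring,
            mul_comm]
  have hfinal : Real.sqrt (V s) ≤ Real.exp (β * s) * Real.sqrt (x ⬝ᵥ P.mulVec x) := by
    have h1 : Real.sqrt (V s) ≤ Real.sqrt (Real.exp (2 * β * s) * (x ⬝ᵥ P.mulVec x)) :=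
      Real.sqrt_le_sqrt hVs
    have h2 : Real.sqrt (Real.exp (2 * β * s) * (x ⬝ᵥ P.mulVec x)) =
        Real.exp (β * s) * Real.sqrt (x ⬝ᵥ P.mulVec x) := by
      rw [show (2 : ℝ) * β * s = β * s + β * s by ring, Real.exp_add,
        show Real.exp (β * s) * Real.exp (β * s) = Real.exp (β * s) ^ 2 by ring,
        Real.sqrt_mul (sq_nonneg _), Real.sqrt_sq (Real.exp_pos _).le]
    rw [h2] at h1
    exact h1
  have hys : (NormedSpace.exp (s • G)).mulVec x = y s := by rw [hydef]
  rw [hys]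
  have hVs' : (y s ⬝ᵥ P.mulVec (y s)) = V s := by rw [hVdef]
  rw [hVs']
  exact hfinal
end

section
/- Let P ≻ 0 and G ∈ ℝ^{n×n} satisfy PG + GᵀP ≻ 0, and let ‖x‖ = √(xᵀPx). Then for every x ≠ 0, the function s ↦ ‖exp(sG)x‖ is strictly increasing on ℝ. -/
open Matrix

private lemma aux_hasDerivAt_mulVec {n : ℕ} (G : Matrix (Fin n) (Fin n) ℝ)
    (x : Fin n → ℝ) (s : ℝ) :
    HasDerivAt (fun t : ℝ => (NormedSpace.exp (t • G)).mulVec x)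
      (G.mulVec ((NormedSpace.exp (s • G)).mulVec x)) s := by
  letI : SeminormedRing (Matrix (Fin n) (Fin n) ℝ) := Matrix.linftyOpSemiNormedRing
  letI : NormedRing (Matrix (Fin n) (Fin n) ℝ) := Matrix.linftyOpNormedRing
  letI : NormedAlgebra ℝ (Matrix (Fin n) (Fin n) ℝ) := Matrix.linftyOpNormedAlgebra
  let L : Matrix (Fin n) (Fin n) ℝ →ₗ[ℝ] (Fin n → ℝ) :=
    { toFun := fun M => M.mulVec x
      map_add' := fun A B => Matrix.add_mulVec A B x
      map_smul' := fun c A => Matrix.smul_mulVec c A x }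
  have hL := (LinearMap.toContinuousLinearMap L).hasFDerivAt
    (x := NormedSpace.exp (s • G))
  have h := hL.comp_hasDerivAt s (hasDerivAt_exp_smul_const' G s)
  rw [Matrix.mulVec_mulVec]
  exact h

/-- if P ≻ 0 and PG + GᵀP ≻ 0 then for every x ≠ 0 the map
s ↦ ‖exp(sG)x‖ (with ‖x‖ = √(xᵀPx)) is strictly increasing on ℝ. -/
theorem monotone_dilation_of_posdef {n : ℕ} (P G : Matrix (Fin n) (Fin n) ℝ)
    (hP : P.PosDef) (hPG : (P * G + Gᵀ * P).PosDef)
    (x : Fin n → ℝ) (hx : x ≠ 0) :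
    StrictMono (fun s : ℝ =>
      Real.sqrt (((NormedSpace.exp (s • G)).mulVec x) ⬝ᵥ
        P.mulVec ((NormedSpace.exp (s • G)).mulVec x))) := by
  set y : ℝ → Fin n → ℝ := fun s => (NormedSpace.exp (s • G)).mulVec x with hy
  have hy0 : ∀ s, y s ≠ 0 := by
    intro s h0
    have hu : IsUnit (NormedSpace.exp (s • G)) := Matrix.isUnit_exp _
    have hinj := Matrix.mulVec_injective_iff_isUnit.2 hu
    exact hx (hinj (by simpa using h0))
  set g : ℝ → ℝ := fun s => y s ⬝ᵥ P.mulVec (y s) with hg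
  have hgpos : ∀ s, 0 < g s := by
    intro s
    have := hP.dotProduct_mulVec_pos (hy0 s)
    simpa using this
  have hgderiv : ∀ s, HasDerivAt g (y s ⬝ᵥ ((P * G + Gᵀ * P).mulVec (y s))) s := by
    intro s
    have hyd : HasDerivAt y (G.mulVec (y s)) s := aux_hasDerivAt_mulVec G x s
    have hyd' : ∀ i, HasDerivAt (fun t => y t i) (G.mulVec (y s) i) s :=
      hasDerivAt_pi.1 hyd
    have hP' : ∀ i, HasDerivAt (fun t => P.mulVec (y t) i)
        (P.mulVec (G.mulVec (y s)) i) s := by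
      intro i
      have : HasDerivAt (fun t => ∑ j, P i j * y t j)
          (∑ j, P i j * G.mulVec (y s) j) s :=
        HasDerivAt.fun_sum (fun j _ => (hyd' j).const_mul (P i j))
      simpa [Matrix.mulVec, dotProduct] using this
    have hsum : HasDerivAt (fun t => ∑ i, y t i * P.mulVec (y t) i)
        (∑ i, (G.mulVec (y s) i * P.mulVec (y s) i +
          y s i * P.mulVec (G.mulVec (y s)) i)) s :=
      HasDerivAt.fun_sum (fun i _ => (hyd' i).mul (hP' i))
    have heq : (∑ i, (G.mulVec (y s) i * P.mulVec (y s) i +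
          y s i * P.mulVec (G.mulVec (y s)) i)) =
        y s ⬝ᵥ ((P * G + Gᵀ * P).mulVec (y s)) := by
      rw [Finset.sum_add_distrib]
      have h1 : (∑ i, G.mulVec (y s) i * P.mulVec (y s) i) =
          y s ⬝ᵥ ((Gᵀ * P).mulVec (y s)) := by
        rw [← Matrix.mulVec_mulVec]
        rw [show y s ⬝ᵥ Gᵀ.mulVec (P.mulVec (y s)) =
          (y s ᵥ* Gᵀ) ⬝ᵥ (P.mulVec (y s)) from Matrix.dotProduct_mulVec _ _ _,
          Matrix.vecMul_transpose]
        rfl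
      have h2 : (∑ i, y s i * P.mulVec (G.mulVec (y s)) i) =
          y s ⬝ᵥ ((P * G).mulVec (y s)) := by
        rw [← Matrix.mulVec_mulVec]; rfl
      rw [h1, h2, Matrix.add_mulVec, dotProduct_add]
      ring
    rw [← heq]
    simpa [hg, dotProduct] using hsum
  have hgmono : StrictMono g :=
    strictMono_of_hasDerivAt_pos hgderiv (fun s => by
      have := hPG.dotProduct_mulVec_pos (hy0 s)
      simpa using this)
  intro a b hab
  exact Real.sqrt_lt_sqrt (le_of_lt (hgpos a)) (hgmono hab)
end

section
/- Let h : ℝ^n \ {0} → ℝ be continuous and d-homogeneous of degree ν with respect to a continuous monotone linear dilation d, and let σ : ℝ → ℝ be continuous and non-polynomial. Then for every ε > 0 there exist N ∈ ℕ, A ∈ ℝ^{N×n}, b ∈ ℝ^N, C ∈ ℝ^{1×N} such that |h(x) − ‖x‖_d^ν · C σ(A d(−ln‖x‖_d)x + b)| ≤ ε ‖x‖_d^ν for all x ≠ 0, where σ is applied componentwise. -/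
open Matrix

/-- Homogeneous universal approximation theorem: assuming the
classical universal approximation property for a continuous non-polynomial
activation σ, any continuous d-homogeneous function h of degree ν admits, for
every ε > 0, a homogeneous ANN approximation
x ↦ ‖x‖_d^ν · C σ(A d(−ln‖x‖_d)x + b) with relative error ε on ℝⁿ \ {0}. -/
theorem homogeneous_universal_approximation {n : ℕ} (G : Matrix (Fin n) (Fin n) ℝ)
    (σ : ℝ → ℝ) (hσc : Continuous σ)
    (hσnp : ¬ ∃ p : Polynomial ℝ, ∀ t : ℝ, σ t = Polynomial.eval t p)
    (hUAT : ∀ K : Set (Fin n → ℝ), IsCompact K →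
      ∀ f : (Fin n → ℝ) → ℝ, ContinuousOn f K → ∀ ε : ℝ, 0 < ε →
        ∃ (N : ℕ) (A : Matrix (Fin N) (Fin n) ℝ) (b : Fin N → ℝ) (C : Fin N → ℝ),
          ∀ x ∈ K, |f x - C ⬝ᵥ (fun i => σ (A.mulVec x i + b i))| ≤ ε)
    (nd : (Fin n → ℝ) → ℝ)
    (hndc : Continuous nd) (hndnn : ∀ x, 0 ≤ nd x)
    (hnd0 : ∀ x : Fin n → ℝ, nd x = 0 ↔ x = 0)
    (hndhom : ∀ (s : ℝ) (x : Fin n → ℝ),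
      nd ((NormedSpace.exp (s • G)).mulVec x) = Real.exp s * nd x)
    (hS : IsCompact {x : Fin n → ℝ | nd x = 1})
    (h : (Fin n → ℝ) → ℝ) (ν : ℝ)
    (hcont : ContinuousOn h {x : Fin n → ℝ | x ≠ 0})
    (hhom : ∀ (s : ℝ) (x : Fin n → ℝ),
      h ((NormedSpace.exp (s • G)).mulVec x) = Real.exp (ν * s) * h x) :
    ∀ ε : ℝ, 0 < ε →
      ∃ (N : ℕ) (A : Matrix (Fin N) (Fin n) ℝ) (b : Fin N → ℝ) (C : Fin N → ℝ),
        ∀ x : Fin n → ℝ, x ≠ 0 →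
          |h x - nd x ^ ν * (C ⬝ᵥ (fun i =>
            σ (A.mulVec ((NormedSpace.exp ((-(Real.log (nd x))) • G)).mulVec x) i
              + b i)))| ≤ ε * nd x ^ ν := by
  intro ε hε
  have hsub : {x : Fin n → ℝ | nd x = 1} ⊆ {x : Fin n → ℝ | x ≠ 0} := by
    intro x hx hx0
    simp only [Set.mem_setOf_eq] at hx
    rw [hx0, (hnd0 0).mpr rfl] at hx
    norm_num at hx
  obtain ⟨N, A, b, C, hNet⟩ := hUAT _ hS h (hcont.mono hsub) ε hε
  refine ⟨N, A, b, C, fun x hx => ?_⟩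
  have hpos : 0 < nd x := lt_of_le_of_ne (hndnn x) (fun e => hx ((hnd0 x).mp e.symm))
  set y := (NormedSpace.exp ((-(Real.log (nd x))) • G)).mulVec x with hy
  have hy1 : nd y = 1 := by
    rw [hy, hndhom, Real.exp_neg, Real.exp_log hpos, inv_mul_cancel₀ hpos.ne']
  have hrpow : nd x ^ ν = Real.exp (Real.log (nd x) * ν) := Real.rpow_def_of_pos hpos ν
  have hhy : h x = nd x ^ ν * h y := by
    rw [hy, hhom, hrpow, ← mul_assoc, ← Real.exp_add]
    ring_nf
    simp
  have hpow : 0 < nd x ^ ν := Real.rpow_pos_of_pos hpos ν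
  have := hNet y hy1
  calc |h x - nd x ^ ν * (C ⬝ᵥ fun i => σ (A.mulVec y i + b i))|
      = nd x ^ ν * |h y - C ⬝ᵥ fun i => σ (A.mulVec y i + b i)| := by
        rw [hhy, ← mul_sub, abs_mul, abs_of_pos hpow]
    _ ≤ nd x ^ ν * ε := by
        exact mul_le_mul_of_nonneg_left this hpow.le
    _ = ε * nd x ^ ν := mul_comm _ _
end

section
/- Let h : ℝ^n \ {0} → ℝ be d-homogeneous of degree ν with respect to a continuous monotone linear dilation d, and let g_ε : ℝ^n → ℝ satisfy |h(y) − g_ε(y)| ≤ ε for all y in the unit sphere S = {y : ‖y‖ = 1}. Define h_ε(x) = ‖x‖_d^ν g_ε(d(−ln‖x‖_d)x) for x ≠ 0. Then |h(x) − h_ε(x)| ≤ ε ‖x‖_d^ν for all x ≠ 0. -/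
/-- homogenization of an ANN: if g_ε approximates the
d-homogeneous function h (of degree ν) with error ε on the unit sphere
S = {y : ‖y‖ = 1}, then the homogeneous extrapolation
h_ε(x) = ‖x‖_d^ν g_ε(d(−ln‖x‖_d)x) satisfies |h(x) − h_ε(x)| ≤ ε‖x‖_d^ν
for all x ≠ 0. -/
theorem homogeneous_extrapolation_error {n : ℕ} (G : Matrix (Fin n) (Fin n) ℝ)
    (N : (Fin n → ℝ) → ℝ)
    (nd : (Fin n → ℝ) → ℝ)
    (hndpos : ∀ x : Fin n → ℝ, x ≠ 0 → 0 < nd x)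
    (hndS : ∀ x : Fin n → ℝ, x ≠ 0 →
      N ((NormedSpace.exp ((-(Real.log (nd x))) • G)).mulVec x) = 1)
    (h : (Fin n → ℝ) → ℝ) (ν : ℝ)
    (hhom : ∀ (s : ℝ) (x : Fin n → ℝ),
      h ((NormedSpace.exp (s • G)).mulVec x) = Real.exp (ν * s) * h x)
    (gε : (Fin n → ℝ) → ℝ) (ε : ℝ)
    (happrox : ∀ y : Fin n → ℝ, N y = 1 → |h y - gε y| ≤ ε) :
    ∀ x : Fin n → ℝ, x ≠ 0 →
      |h x - nd x ^ ν *
        gε ((NormedSpace.exp ((-(Real.log (nd x))) • G)).mulVec x)| ≤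
      ε * nd x ^ ν := by
  intro x hx
  set r := nd x with hr
  have hrpos : 0 < r := hndpos x hx
  set y := (NormedSpace.exp ((-(Real.log r)) • G)).mulVec x with hy
  have hNy : N y = 1 := hndS x hx
  have hhy : h y = Real.exp (ν * (-(Real.log r))) * h x := hhom _ x
  have hrexp : Real.exp (ν * (-(Real.log r))) = r ^ (-ν) := by
    rw [Real.rpow_def_of_pos hrpos]; ring_nf
  have hrν : (0:ℝ) < r ^ ν := Real.rpow_pos_of_pos hrpos ν
  have key : h x = r ^ ν * h y := by
    rw [hhy, hrexp, ← mul_assoc, ← Real.rpow_add hrpos]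
    simp
  calc |h x - r ^ ν * gε y| = r ^ ν * |h y - gε y| := by
        rw [key, ← mul_sub, abs_mul, abs_of_pos hrν]
    _ ≤ r ^ ν * ε := by
        exact mul_le_mul_of_nonneg_left (happrox y hNy) hrν.le
    _ = ε * r ^ ν := mul_comm _ _
end
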